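/- Let α ∈ (0,1], f, g : ℝⁿ → ℝ, and a = (a₁,...,aₙ) ∈ ℝⁿ with each aᵢ > 0. If f and g are α-differentiable at a, then the product fg is α-differentiable at a and D^α(fg)(a) = f(a)·D^α g(a) + g(a)·D^α f(a). -/

import Mathlib

open Filter Topology

/-- The conformably shifted point `(a₁ + h₁a₁^{1-α}, ..., aₙ + hₙaₙ^{1-α})`. -/
noncomputable def confShift {n : ℕ} (α : ℝ) (a h : EuclideanSpace ℝ (Fin n)) :
    EuclideanSpace ℝ (Fin n) :=
  WithLp.toLp 2 (fun i => a i + h i * a i ^ (1 - α))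

/-- `f` is conformably `α`-differentiable at `a` with conformable derivative the
linear map `L`, i.e. `lim_{h→0} ‖f(a₁+h₁a₁^{1-α},...,aₙ+hₙaₙ^{1-α}) - f(a) - L(h)‖/‖h‖ = 0`. -/
def ConformableAt {n : ℕ} {F : Type*} [NormedAddCommGroup F] [NormedSpace ℝ F]
    (α : ℝ) (f : EuclideanSpace ℝ (Fin n) → F) (a : EuclideanSpace ℝ (Fin n))
    (L : EuclideanSpace ℝ (Fin n) →ₗ[ℝ] F) : Prop :=
  Filter.Tendsto (fun h : EuclideanSpace ℝ (Fin n) =>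
      ‖f (confShift α a h) - f a - L h‖ / ‖h‖) (𝓝[≠] 0) (𝓝 0)

@[simp]
lemma confShift_zero {n : ℕ} (α : ℝ) (a : EuclideanSpace ℝ (Fin n)) :
    confShift α a 0 = a := by
  ext i
  simp [confShift]

lemma conformableAt_iff_hasFDerivAt {n : ℕ} {F : Type*} [NormedAddCommGroup F]
    [NormedSpace ℝ F] {α : ℝ} {f : EuclideanSpace ℝ (Fin n) → F}
    {a : EuclideanSpace ℝ (Fin n)} {L : EuclideanSpace ℝ (Fin n) →ₗ[ℝ] F} :
    ConformableAt α f a L ↔ HasFDerivAt (f ∘ confShift α a) L.toContinuousLinearMap 0 := by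
  rw [ConformableAt, hasFDerivAt_iff_tendsto]
  -- The difference quotient is `0` at `h = 0` (division by zero), so the limits
  -- along `𝓝[≠] 0` and `𝓝 0` agree.
  convert continuousWithinAt_compl_self (x := (0 : EuclideanSpace ℝ (Fin n)))
    (f := fun h => ‖h‖⁻¹ * ‖f (confShift α a h) - f a - L h‖) using 1 <;>
    simp [ContinuousWithinAt, ContinuousAt, div_eq_inv_mul]

theorem conformableAt_mul_general {n : ℕ} (α : ℝ)
    (f g : EuclideanSpace ℝ (Fin n) → ℝ)
    (a : EuclideanSpace ℝ (Fin n))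
    (L M : EuclideanSpace ℝ (Fin n) →ₗ[ℝ] ℝ)
    (hf : ConformableAt α f a L) (hg : ConformableAt α g a M) :
    ConformableAt α (fun x => f x * g x) a (f a • M + g a • L) := by
  rw [conformableAt_iff_hasFDerivAt] at hf hg ⊢
  exact (hf.mul hg).congr_fderiv (by simp)

/-- Product rule: if `f, g : ℝⁿ → ℝ` are conformably `α`-differentiable at `a`
(each `aᵢ > 0`), then so is `fg`, and
`D^α(fg)(a) = f(a)·D^α g(a) + g(a)·D^α f(a)`. -/
theorem conformableAt_mul {n : ℕ} (α : ℝ) (hα : α ∈ Set.Ioc (0:ℝ) 1)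
    (f g : EuclideanSpace ℝ (Fin n) → ℝ)
    (a : EuclideanSpace ℝ (Fin n)) (ha : ∀ i, 0 < a i)
    (L M : EuclideanSpace ℝ (Fin n) →ₗ[ℝ] ℝ)
    (hf : ConformableAt α f a L) (hg : ConformableAt α g a M) :
    ConformableAt α (fun x => f x * g x) a (f a • M + g a • L) :=
  conformableAt_mul_general α f g a L M hf hg
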